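/- Let κ be a regular infinite cardinal and let π represent a cardinality-preserving automorphism of P(κ⁺)/I_κ, with ρ an inverse selector for π (i.e. π(ρ(A)) ∼_κ A for all A ⊆ κ⁺). Let C be the set of closure points of π, and let S = {α ∈ C : ¬(π(α̂) ∼_κ α̂)}, where α̂ = {γ : γ < α}. Then there exist S₀ and S₁ with S = S₀ ∪ S₁ such that for each i ∈ {0,1}, every α ∈ S_i is a limit ordinal and there is a ladder system ⟨L_α : α ∈ S_i⟩ on S_i which satisfies 2-uniformization. -/

import Mathlib

open Cardinal Set

universe u

/-- `A ∼_κ B`: the symmetric difference of `A` and `B` has cardinality `< κ`. -/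
def Sim {X : Type u} (κ : Cardinal.{u}) (A B : Set X) : Prop :=
  #(↥(symmDiff A B)) < κ

/-- `π : P(X) → P(X)` represents an automorphism of `P(X)/I_κ`. -/
def IsAutoRep {X : Type u} (κ : Cardinal.{u}) (π : Set X → Set X) : Prop :=
  (∀ A B : Set X, Sim κ A B → Sim κ (π A) (π B)) ∧
  (∀ A B : Set X, Sim κ (π (A ∪ B)) (π A ∪ π B)) ∧
  (∀ A : Set X, Sim κ (π Aᶜ) (π A)ᶜ) ∧
  (∀ B : Set X, ∃ A : Set X, Sim κ (π A) B) ∧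
  (∀ A B : Set X, Sim κ (π A) (π B) → Sim κ A B)

/-- `π` is trivial on `Z`: some `f : X → Z` has `π(A) ∼_κ f⁻¹(A)` for all `A ⊆ Z`. -/
def TrivialOn {X : Type u} (κ : Cardinal.{u}) (π : Set X → Set X) (Z : Set X) : Prop :=
  ∃ f : X → X, (∀ x, f x ∈ Z) ∧ ∀ A : Set X, A ⊆ Z → Sim κ (π A) (f ⁻¹' A)

/-- `π` is trivial: some `f : X → X` has `π(A) ∼_κ f⁻¹(A)` for all `A ⊆ X`. -/
def IsTrivial {X : Type u} (κ : Cardinal.{u}) (π : Set X → Set X) : Prop :=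
  ∃ f : X → X, ∀ A : Set X, Sim κ (π A) (f ⁻¹' A)

/-- `π` is cardinality-preserving. -/
def CardPres {X : Type u} (κ : Cardinal.{u}) (π : Set X → Set X) : Prop :=
  ∀ A : Set X, ∃ B : Set X, #(↥B) = #(↥A) ∧ Sim κ (π A) B

/-- The cardinal `κ⁺`, viewed as the canonical well-ordered type of ordinals below
`(κ⁺).ord`. -/
abbrev SuccType (κ : Cardinal.{u}) : Type u := ((Order.succ κ).ord).ToType

/-- The least cardinality of a cofinal subset of `{β | β < α}` (for `α` a limit, this is
the cofinality of `α`). -/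
noncomputable def CofCard {T : Type u} [LinearOrder T] (α : T) : Cardinal.{u} :=
  sInf {c : Cardinal.{u} | ∃ S : Set T, S ⊆ Set.Iio α ∧
    (∀ β < α, ∃ γ ∈ S, β ≤ γ) ∧ #(↥S) = c}

/-- `Lad` is a ladder on `α`: a cofinal subset of `{β | β < α}` whose order type is the
cofinality of `α` (witnessed by a strictly increasing enumeration indexed by a well order
of type `cf(α)`). -/
def IsLadderOn {T : Type u} [LinearOrder T] (Lad : Set T) (α : T) : Prop :=
  Lad ⊆ Set.Iio α ∧ (∀ β < α, ∃ γ ∈ Lad, β ≤ γ) ∧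
  ∃ e : ((CofCard α).ord).ToType → T, StrictMono e ∧ Set.range e = Lad

/-- The ladder system `⟨Lad α : α ∈ S⟩` satisfies 2-uniformization (with error sets of
cardinality `< κ`). -/
def TwoUnif {T : Type u} [LinearOrder T] (κ : Cardinal.{u}) (S : Set T)
    (Lad : T → Set T) : Prop :=
  ∀ f : T → T → Bool, ∃ F : T → Bool, ∀ α ∈ S,
    #(↥{β ∈ Lad α | F β ≠ f α β}) < κ

/-!
A non-fixed closure point `α` is a limit: `π ∅ ∼ ∅` rules out a minimal `α`, and at `α = γ + 1` we
have `Iio α ∼ Iio γ`, so closure under `π` and `ρ` would give `π (Iio α) ∼ Iio α`.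

Let `S₀` be the part of `S` where `π (Iio α) \ Iio α` is large and `S₁` the rest. On `S₁` the set
`ρ (Iio α) \ Iio α` is large, for otherwise `Iio α ∼ π (ρ (Iio α))` would lie almost inside
`π (Iio α)`. So on each half there is an automorphism `τ` (`π` on `S₀`, `ρ` on `S₁`) with a selector
`σ` such that `τ (Iio α) \ Iio α` is large. Cutting these sets at the next point of the half leaves
large, pairwise disjoint sets `V α`. By closure `σ (V α)` lies almost inside `Iio α`, and it is
cofinal in `α`, so it contains a ladder `L α`. Given `f`, let `A` be the union of the sets
`τ {β ∈ L α | f α β} ∩ V α`: the indicator of `σ A` uniformizes `f`, because disjointness gives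
`σ A ∩ σ (V α) ∼ σ (τ {β ∈ L α | f α β}) ∼ {β ∈ L α | f α β}`.
-/

section SimCalculus

variable {X : Type u} {κ : Cardinal.{u}} {A B C D : Set X}

theorem mk_lt_of_subset_union (hκ : ℵ₀ ≤ κ) (h : A ⊆ B ∪ C) (hB : #B < κ) (hC : #C < κ) :
    #A < κ :=
  (mk_le_mk_of_subset h).trans_lt <| (mk_union_le B C).trans_lt (add_lt_of_lt hκ hB hC)

theorem mk_diff_lt_trans (hκ : ℵ₀ ≤ κ) (hAB : #↥(A \ B) < κ) (hBC : #↥(B \ C) < κ) :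
    #↥(A \ C) < κ :=
  mk_lt_of_subset_union hκ (sdiff_triangle A B C) hAB hBC

theorem sim_iff (hκ : ℵ₀ ≤ κ) : Sim κ A B ↔ #↥(A \ B) < κ ∧ #↥(B \ A) < κ :=
  ⟨fun h => ⟨(mk_le_mk_of_subset subset_union_left).trans_lt h,
    (mk_le_mk_of_subset subset_union_right).trans_lt h⟩,
   fun h => mk_lt_of_subset_union hκ subset_rfl h.1 h.2⟩

theorem sim_empty_iff : Sim κ A ∅ ↔ #A < κ := by
  rw [Sim, ← bot_eq_empty, symmDiff_bot]

theorem Sim.refl (hκ : ℵ₀ ≤ κ) (A : Set X) : Sim κ A A := by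
  rw [Sim, symmDiff_self]
  simpa using aleph0_pos.trans_le hκ

theorem Sim.symm (h : Sim κ A B) : Sim κ B A := by
  rwa [Sim, symmDiff_comm]

theorem Sim.trans (hκ : ℵ₀ ≤ κ) (hAB : Sim κ A B) (hBC : Sim κ B C) : Sim κ A C :=
  mk_lt_of_subset_union hκ (symmDiff_triangle A B C) hAB hBC

theorem Sim.mk_diff_lt (hκ : ℵ₀ ≤ κ) (h : Sim κ A B) (hB : #↥(B \ C) < κ) : #↥(A \ C) < κ :=
  mk_diff_lt_trans hκ ((sim_iff hκ).1 h).1 hB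

theorem Sim.mk_lt (hκ : ℵ₀ ≤ κ) (h : Sim κ A B) (hB : #B < κ) : #A < κ :=
  sim_empty_iff.1 <| h.trans hκ (sim_empty_iff.2 hB)

theorem Sim.union (hκ : ℵ₀ ≤ κ) (hAB : Sim κ A B) (hCD : Sim κ C D) :
    Sim κ (A ∪ C) (B ∪ D) :=
  mk_lt_of_subset_union hκ (fun x => by simp only [mem_symmDiff, mem_union]; tauto) hAB hCD

theorem Sim.inter (hκ : ℵ₀ ≤ κ) (hAB : Sim κ A B) (hCD : Sim κ C D) :
    Sim κ (A ∩ C) (B ∩ D) :=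
  mk_lt_of_subset_union hκ
    (fun x => by simp only [mem_symmDiff, mem_union, mem_inter_iff]; tauto) hAB hCD

theorem Sim.compl (h : Sim κ A B) : Sim κ Aᶜ Bᶜ := by
  rwa [Sim, compl_symmDiff_compl]

end SimCalculus

section Ladder

variable {T : Type u} [LinearOrder T]

theorem exists_strictMono_forall_le {ι : Type u} [LinearOrder ι] [WellFoundedLT ι]
    {c : Cardinal.{u}} (hι : ∀ i : ι, #(Iio i) < c) {U : Set T} (g : ι → T)
    (h : ∀ i, ∀ Y ⊆ U, #Y < c → ∃ γ ∈ U, g i ≤ γ ∧ ∀ y ∈ Y, y < γ) :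
    ∃ e : ι → T, StrictMono e ∧ (∀ i, e i ∈ U) ∧ ∀ i, g i ≤ e i := by
  have step : ∀ i (p : ∀ j, j < i → T),
      ∃ γ, γ ∈ U ∧ g i ≤ γ ∧ ∀ j hj, p j hj ∈ U → p j hj < γ := by
    intro i p
    have hY : #↥{t ∈ U | ∃ j hj, p j hj = t} < c := by
      refine lt_of_le_of_lt ?_ (hι i)
      refine (mk_le_mk_of_subset fun t ht => ?_).trans
        (mk_range_le (f := fun j : Iio i => p j.1 j.2))
      obtain ⟨-, j, hj, rfl⟩ := ht
      exact ⟨⟨j, hj⟩, rfl⟩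
    obtain ⟨γ, hγU, hgγ, hγ⟩ := h i _ (sep_subset _ _) hY
    exact ⟨γ, hγU, hgγ, fun j hj hp => hγ _ ⟨hp, j, hj, rfl⟩⟩
  choose F hF using step
  set e : ι → T := wellFounded_lt.fix F
  have he : ∀ i, e i = F i (fun j _ => e j) := wellFounded_lt.fix_eq F
  have heU : ∀ i, e i ∈ U := fun i => by rw [he]; exact (hF i _).1
  refine ⟨e, fun j i hji => ?_, heU, fun i => ?_⟩
  · rw [he i]; exact (hF i (fun j _ => e j)).2.2 j hji (heU j)
  · rw [he]; exact (hF i (fun j _ => e j)).2.1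

theorem exists_cofinal_mk_eq_cofCard (α : T) :
    ∃ W ⊆ Iio α, (∀ β < α, ∃ γ ∈ W, β ≤ γ) ∧ #W = CofCard α :=
  csInf_mem (s := {c | ∃ W ⊆ Iio α, (∀ β < α, ∃ γ ∈ W, β ≤ γ) ∧ #W = c})
    ⟨_, Iio α, subset_rfl, fun β hβ => ⟨β, hβ, le_rfl⟩, rfl⟩

theorem exists_lt_forall_lt_of_mk_lt_cofCard {α : T} {Y : Set T} (hY : Y ⊆ Iio α)
    (hYc : #Y < CofCard α) : ∃ β < α, ∀ y ∈ Y, y < β := by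
  by_contra! hcon
  exact hYc.not_ge (csInf_le' ⟨Y, hY, hcon, rfl⟩)

theorem exists_isLadderOn_subset {α : T} (hα : Order.IsSuccLimit α) {U : Set T}
    (hU : U ⊆ Iio α) (hUcof : ∀ β < α, ∃ γ ∈ U, β ≤ γ) :
    ∃ L, IsLadderOn L α ∧ L ⊆ U := by
  obtain ⟨W, hWα, hWcof, hWc⟩ := exists_cofinal_mk_eq_cofCard α
  obtain ⟨g⟩ : Nonempty ((CofCard α).ord.ToType ≃ W) :=
    Cardinal.eq.1 (by rw [mk_toType, card_ord, hWc])
  have hstep : ∀ i, ∀ Y ⊆ U, #Y < CofCard α → ∃ γ ∈ U, (g i : T) ≤ γ ∧ ∀ y ∈ Y, y < γ := by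
    intro i Y hYU hYc
    obtain ⟨β, hβα, hβ⟩ := exists_lt_forall_lt_of_mk_lt_cofCard (hYU.trans hU) hYc
    obtain ⟨δ, hδα, hδ⟩ := hα.lt_iff_exists_lt.1 (max_lt hβα (hWα (g i).2))
    obtain ⟨γ, hγU, hδγ⟩ := hUcof δ hδα
    have hmax : max β (g i : T) < γ := hδ.trans_le hδγ
    exact ⟨γ, hγU, (le_max_right _ _).trans hmax.le,
      fun y hy => (hβ y hy).trans ((le_max_left _ _).trans_lt hmax)⟩
  obtain ⟨e, he, heU, hge⟩ :=
    exists_strictMono_forall_le (fun i => by simpa using mk_Iio_lt i) (fun i => (g i : T)) hstep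
  refine ⟨range e, ⟨range_subset_iff.2 fun i => hU (heU i), fun β hβ => ?_, e, he, rfl⟩,
    range_subset_iff.2 heU⟩
  obtain ⟨γ, hγW, hβγ⟩ := hWcof β hβ
  refine ⟨e (g.symm ⟨γ, hγW⟩), mem_range_self _, hβγ.trans ?_⟩
  simpa using hge (g.symm ⟨γ, hγW⟩)

end Ladder

theorem exists_pairwiseDisjoint_subset {T : Type u} [LinearOrder T] [WellFoundedLT T]
    {κ : Cardinal.{u}} (hκ : κ ≠ 0) {S : Set T} {B : T → Set T}
    (hB : ∀ α ∈ S, Disjoint (B α) (Iio α))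
    (hBlt : ∀ α ∈ S, ∀ β ∈ S, α < β → #↥(B α \ Iio β) < κ) :
    ∃ V : T → Set T, (∀ α, V α ⊆ B α) ∧ S.PairwiseDisjoint V ∧ ∀ α ∈ S, #↥(B α \ V α) < κ := by
  refine ⟨fun α => {x ∈ B α | ∀ β ∈ S, α < β → x < β}, fun α => sep_subset _ _, ?_, ?_⟩
  · intro a ha b hb hab
    wlog hlt : a < b generalizing a b
    · exact (this hb ha hab.symm ((Ne.lt_or_gt hab).resolve_left hlt)).symm
    exact disjoint_left.2 fun x hxa hxb => disjoint_left.1 (hB b hb) hxb.1 (hxa.2 b hb hlt)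
  intro α hα
  by_cases hnext : ∃ β ∈ S, α < β
  · -- only the least element of `S` above `α` cuts anything off `B α`
    obtain ⟨β, ⟨hβS, hαβ⟩, hβmin⟩ := wellFounded_lt.has_min {β | β ∈ S ∧ α < β} hnext
    refine (mk_le_mk_of_subset (t := B α \ Iio β) fun x hx => ⟨hx.1, fun hxβ => ?_⟩).trans_lt
      (hBlt α hα β hβS hαβ)
    exact hx.2 ⟨hx.1, fun γ hγS hαγ => lt_of_lt_of_le hxβ (not_lt.1 (hβmin γ ⟨hγS, hαγ⟩))⟩
  · simp only [not_exists, not_and, not_lt] at hnext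
    convert pos_iff_ne_zero.2 hκ
    rw [mk_eq_zero_iff, isEmpty_subtype]
    exact fun x hx => hx.2 ⟨hx.1, fun β hβ hαβ => absurd hαβ (not_lt.2 (hnext β hβ))⟩

namespace IsAutoRep

variable {X : Type u} {κ : Cardinal.{u}} {π ρ : Set X → Set X} {A B : Set X}

theorem sim_empty (hκ : ℵ₀ ≤ κ) (hπ : IsAutoRep κ π) : Sim κ (π ∅) ∅ := by
  obtain ⟨A, hA⟩ := hπ.2.2.2.1 ∅
  have hunion : Sim κ (π A) (π A ∪ π ∅) := by simpa using hπ.2.1 A ∅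
  -- `π` is monotone modulo small sets, so `π ∅` lies almost inside the small set `π A`
  have hdiff : #↥(π ∅ \ π A) < κ :=
    (mk_le_mk_of_subset fun x hx => Or.inr ⟨Or.inr hx.1, hx.2⟩).trans_lt hunion
  exact sim_empty_iff.2 <| mk_lt_of_subset_union hκ (subset_sdiff_union _ _) hdiff
    (sim_empty_iff.1 hA)

theorem map_inter (hκ : ℵ₀ ≤ κ) (hπ : IsAutoRep κ π) (A B : Set X) :
    Sim κ (π (A ∩ B)) (π A ∩ π B) := by
  have h := (hπ.2.2.1 (Aᶜ ∪ Bᶜ)).trans hκ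
    ((hπ.2.1 Aᶜ Bᶜ).trans hκ ((hπ.2.2.1 A).union hκ (hπ.2.2.1 B))).compl
  rwa [← compl_inter, compl_compl, compl_union, compl_compl, compl_compl] at h

theorem map_diff (hκ : ℵ₀ ≤ κ) (hπ : IsAutoRep κ π) (A B : Set X) :
    Sim κ (π (A \ B)) (π A \ π B) :=
  (hπ.map_inter hκ A Bᶜ).trans hκ ((Sim.refl hκ _).inter hκ (hπ.2.2.1 B))

theorem mk_lt_iff (hκ : ℵ₀ ≤ κ) (hπ : IsAutoRep κ π) : #(π A) < κ ↔ #A < κ := by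
  refine ⟨fun h => sim_empty_iff.1 <| hπ.2.2.2.2 _ _ ?_, fun h => ?_⟩
  · exact (sim_empty_iff.2 h).trans hκ (hπ.sim_empty hκ).symm
  · exact sim_empty_iff.1 <| (hπ.1 _ _ (sim_empty_iff.2 h)).trans hκ (hπ.sim_empty hκ)

theorem mk_diff_lt_iff (hκ : ℵ₀ ≤ κ) (hπ : IsAutoRep κ π) :
    #↥(π A \ π B) < κ ↔ #↥(A \ B) < κ := by
  rw [← hπ.mk_lt_iff hκ (A := A \ B)]
  exact ⟨fun h => (hπ.map_diff hκ A B).mk_lt hκ h, fun h => (hπ.map_diff hκ A B).symm.mk_lt hκ h⟩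

section Selector

variable (hκ : ℵ₀ ≤ κ) (hπ : IsAutoRep κ π) (hρ : ∀ A, Sim κ (π (ρ A)) A)
include hκ hπ hρ

theorem selector_congr (h : Sim κ A B) : Sim κ (ρ A) (ρ B) :=
  hπ.2.2.2.2 _ _ <| (hρ A).trans hκ (h.trans hκ (hρ B).symm)

omit hκ in
theorem selector_comp (A : Set X) : Sim κ (ρ (π A)) A :=
  hπ.2.2.2.2 _ _ (hρ (π A))

theorem of_selector : IsAutoRep κ ρ := by
  refine ⟨fun A B => selector_congr hκ hπ hρ, fun A B => hπ.2.2.2.2 _ _ ?_,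
    fun A => hπ.2.2.2.2 _ _ ?_, fun B => ⟨π B, selector_comp hπ hρ B⟩,
    fun A B h => (hρ A).symm.trans hκ ((hπ.1 _ _ h).trans hκ (hρ B))⟩
  · exact (hρ _).trans hκ ((hπ.2.1 _ _).trans hκ ((hρ A).union hκ (hρ B))).symm
  · exact (hρ _).trans hκ ((hπ.2.2.1 _).trans hκ (hρ A).compl).symm

theorem mk_diff_map_lt (h : #↥(ρ A \ A) < κ) : #↥(A \ π A) < κ :=
  ((hρ A).symm.mk_diff_lt hκ ((hπ.mk_diff_lt_iff hκ).2 h))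

theorem isSuccLimit [LinearOrder X] {α : X}
    (hπα : ∀ β < α, #↥(π (Iio β) \ Iio α) < κ) (hρα : ∀ β < α, #↥(ρ (Iio β) \ Iio α) < κ)
    (hα : ¬ Sim κ (π (Iio α)) (Iio α)) : Order.IsSuccLimit α := by
  refine ⟨fun hmin => hα ?_, fun γ hγ => hα ?_⟩
  · rw [Iio_eq_empty_iff.2 hmin]
    exact hπ.sim_empty hκ
  · have hsim : Sim κ (Iio α) (Iio γ) := by
      rw [hγ.Iio_eq, Sim, symmDiff_of_ge Iio_subset_Iic_self, Iic_sdiff_Iio_same]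
      simpa using one_lt_aleph0.trans_le hκ
    refine (sim_iff hκ).2 ⟨(hπ.1 _ _ hsim).mk_diff_lt hκ (hπα γ hγ.lt), ?_⟩
    exact hπ.mk_diff_map_lt hκ hρ
      ((hπ.selector_congr hκ hρ hsim).mk_diff_lt hκ (hρα γ hγ.lt))

theorem cofinal_selector_inter_Iio [LinearOrder X] {α : X} (hα : ∀ β < α, #↥(π (Iio β) \ Iio α) < κ)
    {V : Set X} (hV : V ⊆ π (Iio α) \ Iio α) (hVbig : ¬ #V < κ) :
    ∀ β < α, ∃ γ ∈ ρ V ∩ Iio α, β ≤ γ := by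
  intro β hβ
  by_contra! hcon
  apply hVbig
  -- `ρ V ⊆ Iio β ∪ (Iio α)ᶜ`, so `V ∼ π (ρ V)` lies almost inside `π (Iio β) ∪ (π (Iio α))ᶜ`
  have hρV : ρ V \ (Iio β ∪ (Iio α)ᶜ) = ∅ :=
    sdiff_eq_empty.2 fun x hx => (lt_or_ge x α).imp (fun hxα => hcon x ⟨hx, hxα⟩) not_lt.2
  have hπW : Sim κ (π (Iio β ∪ (Iio α)ᶜ)) (π (Iio β) ∪ (π (Iio α))ᶜ) :=
    (hπ.2.1 _ _).trans hκ ((Sim.refl hκ _).union hκ (hπ.2.2.1 _))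
  have hVsub : #↥(V \ (π (Iio β) ∪ (π (Iio α))ᶜ)) < κ := by
    refine (hρ V).symm.mk_diff_lt hκ (mk_diff_lt_trans hκ ((hπ.mk_diff_lt_iff hκ).2 ?_)
      ((sim_iff hκ).1 hπW).1)
    rw [hρV]
    simpa using aleph0_pos.trans_le hκ
  refine mk_lt_of_subset_union hκ (fun x hx => ?_) hVsub (hα β hβ)
  have := hV hx
  simp only [mem_sdiff, mem_union, mem_compl_iff] at this ⊢
  tauto

end Selector

theorem twoUnif_of_subset_map [LinearOrder X] (hκ : ℵ₀ ≤ κ) (hπ : IsAutoRep κ π)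
    {S : Set X} {V : X → Set X} (hV : S.PairwiseDisjoint V) {L : X → Set X}
    (hL : ∀ α ∈ S, L α ⊆ π (V α)) :
    TwoUnif κ S L := by
  classical
  choose ρ hρ using hπ.2.2.2.1
  intro f
  set G : X → Set X := fun α => {β ∈ L α | f α β = true}
  set A := ⋃ α ∈ S, ρ (G α) ∩ V α
  -- on `V α` the set `A` is `ρ (G α)`, so `π A` almost agrees with `G α` on `π (V α)`
  refine ⟨fun β => decide (β ∈ π A), fun α hα => ?_⟩
  have hρG : #↥(ρ (G α) \ V α) < κ :=
    (hπ.mk_diff_lt_iff hκ).1 <| (hρ _).mk_diff_lt hκ <| by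
      rw [sdiff_eq_empty.2 fun β hβ => hL α hα hβ.1]
      simpa using aleph0_pos.trans_le hκ
  have hAV : A ∩ V α = ρ (G α) ∩ V α := by
    refine Subset.antisymm (fun x ⟨hxA, hxV⟩ => ⟨?_, hxV⟩) (fun x hx => ⟨mem_biUnion hα hx, hx.2⟩)
    obtain ⟨a, ha, hxa⟩ := mem_iUnion₂.1 hxA
    obtain rfl := hV.elim_set ha hα x hxa.2 hxV
    exact hxa.1
  have hπA : Sim κ (π A ∩ π (V α)) (G α) := by
    refine (hπ.map_inter hκ A (V α)).symm.trans hκ ((hπ.1 _ _ ?_).trans hκ (hρ _))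
    rwa [hAV, Sim, symmDiff_of_le inter_subset_left, sdiff_self_inter]
  refine (mk_le_mk_of_subset fun β hβ => ?_).trans_lt hπA
  obtain ⟨hβL, hβf⟩ := hβ
  have hβV := hL α hα hβL
  by_cases hβA : β ∈ π A <;> cases hf : f α β <;> simp_all [G, mem_symmDiff]

theorem exists_ladderSystem_twoUnif [LinearOrder X] [WellFoundedLT X] (hκ : ℵ₀ ≤ κ)
    (hπ : IsAutoRep κ π) {S : Set X}
    (hclosed : ∀ α ∈ S, ∀ β < α, #↥(π (Iio β) \ Iio α) < κ)
    (hbig : ∀ α ∈ S, ¬ #↥(π (Iio α) \ Iio α) < κ) (hlim : ∀ α ∈ S, Order.IsSuccLimit α) :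
    ∃ Lad : X → Set X, (∀ α ∈ S, IsLadderOn (Lad α) α) ∧ TwoUnif κ S Lad := by
  choose ρ hρ using hπ.2.2.2.1
  obtain ⟨V, hVsub, hVdisj, hVlarge⟩ :=
    exists_pairwiseDisjoint_subset (aleph0_pos.trans_le hκ).ne' (S := S)
      (B := fun α => π (Iio α) \ Iio α) (fun α _ => disjoint_sdiff_left)
      fun α _ β hβ hαβ => (mk_le_mk_of_subset (sdiff_subset_sdiff_left sdiff_subset)).trans_lt
        (hclosed β hβ α hαβ)
  have hlad : ∀ α, ∃ L : Set X, α ∈ S → IsLadderOn L α ∧ L ⊆ ρ (V α) := by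
    intro α
    by_cases hα : α ∈ S
    · have hVbig : ¬ #(V α) < κ := fun h =>
        hbig α hα (mk_lt_of_subset_union hκ (subset_sdiff_union _ (V α)) (hVlarge α hα) h)
      obtain ⟨L, hL, hLV⟩ := exists_isLadderOn_subset (hlim α hα) inter_subset_right
        (hπ.cofinal_selector_inter_Iio hκ hρ (hclosed α hα) (hVsub α) hVbig)
      exact ⟨L, fun _ => ⟨hL, hLV.trans inter_subset_left⟩⟩
    · exact ⟨∅, fun h => absurd h hα⟩
  choose Lad hLad using hlad
  exact ⟨Lad, fun α hα => (hLad α hα).1,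
    (hπ.of_selector hκ hρ).twoUnif_of_subset_map hκ hVdisj fun α hα => (hLad α hα).2⟩

end IsAutoRep

theorem stmt19_general (κ : Cardinal.{u}) (hκ : ℵ₀ ≤ κ)
    (π : Set (SuccType κ) → Set (SuccType κ)) (hπ : IsAutoRep κ π)
    (ρ : Set (SuccType κ) → Set (SuccType κ))
    (hρ : ∀ A : Set (SuccType κ), Sim κ (π (ρ A)) A)
    (C : Set (SuccType κ))
    (hC : C = {β : SuccType κ | ∀ α < β,
      (#(↥(π (Set.Iio α) \ Set.Iio β)) < κ ∧ ¬ Sim κ (π (Set.Iio α)) (Set.Iio β)) ∧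
      (#(↥(ρ (Set.Iio α) \ Set.Iio β)) < κ ∧ ¬ Sim κ (ρ (Set.Iio α)) (Set.Iio β))})
    (S : Set (SuccType κ))
    (hS : S = {α ∈ C | ¬ Sim κ (π (Set.Iio α)) (Set.Iio α)}) :
    ∃ S₀ S₁ : Set (SuccType κ), S = S₀ ∪ S₁ ∧
      (∀ α ∈ S₀, Order.IsSuccLimit α) ∧ (∀ α ∈ S₁, Order.IsSuccLimit α) ∧
      (∃ Lad : SuccType κ → Set (SuccType κ),
        (∀ α ∈ S₀, IsLadderOn (Lad α) α) ∧ TwoUnif κ S₀ Lad) ∧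
      (∃ Lad : SuccType κ → Set (SuccType κ),
        (∀ α ∈ S₁, IsLadderOn (Lad α) α) ∧ TwoUnif κ S₁ Lad) := by
  have hmem : ∀ α ∈ S, (∀ β < α, #↥(π (Iio β) \ Iio α) < κ) ∧
      (∀ β < α, #↥(ρ (Iio β) \ Iio α) < κ) ∧ ¬ Sim κ (π (Iio α)) (Iio α) := by
    intro α hα
    rw [hS, hC] at hα
    exact ⟨fun β hβ => (hα.1 β hβ).1.1, fun β hβ => (hα.1 β hβ).2.1, hα.2⟩
  have hlim : ∀ α ∈ S, Order.IsSuccLimit α := fun α hα =>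
    hπ.isSuccLimit hκ hρ (hmem α hα).1 (hmem α hα).2.1 (hmem α hα).2.2
  have hρbig : ∀ α ∈ S, #↥(π (Iio α) \ Iio α) < κ → ¬ #↥(ρ (Iio α) \ Iio α) < κ :=
    fun α hα hπα hρα => (hmem α hα).2.2 ((sim_iff hκ).2 ⟨hπα, hπ.mk_diff_map_lt hκ hρ hρα⟩)
  refine ⟨{α ∈ S | ¬ #↥(π (Iio α) \ Iio α) < κ}, {α ∈ S | #↥(π (Iio α) \ Iio α) < κ},
    by ext α; simp only [mem_union, mem_sep_iff]; tauto,
    fun α hα => hlim α hα.1, fun α hα => hlim α hα.1, ?_, ?_⟩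
  · exact hπ.exists_ladderSystem_twoUnif hκ (fun α hα => (hmem α hα.1).1) (fun α hα => hα.2)
      (fun α hα => hlim α hα.1)
  · exact (hπ.of_selector hκ hρ).exists_ladderSystem_twoUnif hκ (fun α hα => (hmem α hα.1).2.1)
      (fun α hα => hρbig α hα.1 hα.2) (fun α hα => hlim α hα.1)

/-- If `π` is a cardinality-preserving automorphism of `P(κ⁺)/I_κ` (κ regular) with
inverse selector `ρ`, `C` is the set of closure points of `π`, and `S` is the set of
non-fixed closure points, then `S` splits into two sets each of which carries a ladder
system satisfying 2-uniformization. -/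
theorem stmt19 (κ : Cardinal.{u}) (hκ : ℵ₀ ≤ κ) (hreg : κ.IsRegular)
    (π : Set (SuccType κ) → Set (SuccType κ)) (hπ : IsAutoRep κ π)
    (hcp : CardPres κ π)
    (ρ : Set (SuccType κ) → Set (SuccType κ))
    (hρ : ∀ A : Set (SuccType κ), Sim κ (π (ρ A)) A)
    (C : Set (SuccType κ))
    (hC : C = {β : SuccType κ | ∀ α < β,
      (#(↥(π (Set.Iio α) \ Set.Iio β)) < κ ∧ ¬ Sim κ (π (Set.Iio α)) (Set.Iio β)) ∧
      (#(↥(ρ (Set.Iio α) \ Set.Iio β)) < κ ∧ ¬ Sim κ (ρ (Set.Iio α)) (Set.Iio β))})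
    (S : Set (SuccType κ))
    (hS : S = {α ∈ C | ¬ Sim κ (π (Set.Iio α)) (Set.Iio α)}) :
    ∃ S₀ S₁ : Set (SuccType κ), S = S₀ ∪ S₁ ∧
      (∀ α ∈ S₀, Order.IsSuccLimit α) ∧ (∀ α ∈ S₁, Order.IsSuccLimit α) ∧
      (∃ Lad : SuccType κ → Set (SuccType κ),
        (∀ α ∈ S₀, IsLadderOn (Lad α) α) ∧ TwoUnif κ S₀ Lad) ∧
      (∃ Lad : SuccType κ → Set (SuccType κ),
        (∀ α ∈ S₁, IsLadderOn (Lad α) α) ∧ TwoUnif κ S₁ Lad) :=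
  stmt19_general κ hκ π hπ ρ hρ C hC S hS
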